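/- arXiv:2408.11470 — 6 statements merged into one kernel-verified Lean document; each statement's English description precedes it below -/
import Mathlib

section
/- For all real numbers β and γ with 0 < β ≤ 1 and 0 < γ ≤ 1 and every natural number k, it holds that γ(1−β)^k / (1 − (1−γ)(1−β)^k) ≥ (γ(1−β)/(γ + β − γβ))^k. -/
/-- Positive correlation of blocking events: the probability that all `k` outgoing
edges are blocked, `γ(1−β)^k / (1 − (1−γ)(1−β)^k)`, is at least the product of the
marginal blocking probabilities `(γ(1−β)/(γ + β − γβ))^k`. -/
theorem stmt_4 (β γ : ℝ) (hβ0 : 0 < β) (hβ1 : β ≤ 1) (hγ0 : 0 < γ) (hγ1 : γ ≤ 1) (k : ℕ) :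
    γ * (1 - β) ^ k / (1 - (1 - γ) * (1 - β) ^ k) ≥
      (γ * (1 - β) / (γ + β - γ * β)) ^ k := by
  have hx0 : (0:ℝ) ≤ 1 - β := by linarith
  have hg0 : (0:ℝ) ≤ 1 - γ := by linarith
  have hxk : ∀ n : ℕ, (1 - β) ^ n ≤ 1 := fun n => pow_le_one₀ hx0 (by linarith)
  have hxn : ∀ n : ℕ, (0:ℝ) ≤ (1 - β) ^ n := fun n => pow_nonneg hx0 n
  have hD : ∀ n : ℕ, 0 < 1 - (1 - γ) * (1 - β) ^ n := by
    intro n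
    nlinarith [hxk n, hxn n, mul_le_of_le_one_right hg0 (hxk n)]
  have hE : (0:ℝ) < γ + β - γ * β := by nlinarith
  induction k with
  | zero =>
    simp only [pow_zero, mul_one]
    rw [show (1:ℝ) - (1 - γ) = γ by ring, div_self hγ0.ne']
  | succ k ih =>
    rw [pow_succ]
    have hr : (0:ℝ) ≤ γ * (1 - β) / (γ + β - γ * β) :=
      div_nonneg (by nlinarith) hE.le
    have hL : 0 ≤ γ * (1 - β) ^ k / (1 - (1 - γ) * (1 - β) ^ k) :=
      div_nonneg (by nlinarith [hxn k]) (hD k).le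
    have key : γ * (1 - β) ^ k / (1 - (1 - γ) * (1 - β) ^ k) *
        (γ * (1 - β) / (γ + β - γ * β)) ≤
        γ * (1 - β) ^ (k + 1) / (1 - (1 - γ) * (1 - β) ^ (k + 1)) := by
      rw [div_mul_div_comm, div_le_div_iff₀ (mul_pos (hD k) hE) (hD (k + 1))]
      have hP : 0 ≤ γ * ((1 - β) ^ k * (1 - β)) * ((1 - γ) * (β * (1 - (1 - β) ^ k))) := by
        apply mul_nonneg
        · exact mul_nonneg hγ0.le (mul_nonneg (hxn k) hx0)
        · exact mul_nonneg hg0 (mul_nonneg hβ0.le (by linarith [hxk k]))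
      rw [pow_succ]
      nlinarith [hP]
    calc (γ * (1 - β) / (γ + β - γ * β)) ^ k * (γ * (1 - β) / (γ + β - γ * β))
        ≤ γ * (1 - β) ^ k / (1 - (1 - γ) * (1 - β) ^ k) *
          (γ * (1 - β) / (γ + β - γ * β)) := by
          exact mul_le_mul_of_nonneg_right ih hr
      _ ≤ γ * (1 - β) ^ (k + 1) / (1 - (1 - γ) * (1 - β) ^ (k + 1)) := key
end

section
/- Let 0 < γ ≤ 1 and 0 < β_0, β_1, ..., β_k ≤ 1, and let T_R, T_0, T_1, ..., T_k be mutually independent random variables taking values in the positive integers with P(T_R = t) = γ(1−γ)^{t−1} and P(T_i = t) = β_i(1−β_i)^{t−1} for each i ∈ {0,1,...,k} and every integer t ≥ 1. Then P(T_0 ≤ T_R and T_i > T_R for all i ∈ {1,...,k}) ≤ P(T_0 ≤ T_R) · P(T_i > T_R for all i ∈ {1,...,k}). -/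
/-!
Conditionally on `T_R = t`, the event `T_0 ≤ T_R` and the event `T_i > T_R` for all `i ≠ 0`
become the independent events `T_0 ≤ t` and `T_i > t` for all `i ≠ 0`, whose probabilities are
respectively nondecreasing and nonincreasing in `t`. Averaging over the law of `T_R`, the claim
is Chebyshev's sum inequality for an increasing and a decreasing function, which comes from
summing the rearrangement inequality `f s g s + f t g t ≤ f s g t + f t g s` against the
product weight `P(T_R = s) P(T_R = t)`.
-/

open MeasureTheory ProbabilityTheory
open scoped ENNReal

theorem mul_add_mul_le_mul_add_mul_of_canonicallyOrderedAdd {R : Type*} [CommSemiring R]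
    [PartialOrder R] [CanonicallyOrderedAdd R] {a b c d : R} (hab : a ≤ b) (hcd : c ≤ d) :
    a * d + b * c ≤ a * c + b * d := by
  obtain ⟨e, rfl⟩ := exists_add_of_le hab
  obtain ⟨f, rfl⟩ := exists_add_of_le hcd
  calc a * (c + f) + (a + e) * c ≤ a * (c + f) + (a + e) * c + e * f := le_self_add
    _ = a * c + (a + e) * (c + f) := by ring

theorem Antivary.mul_add_mul_le_mul_add_mul_of_canonicallyOrderedAdd {ι R : Type*}
    [CommSemiring R] [LinearOrder R] [CanonicallyOrderedAdd R] {f g : ι → R}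
    (hfg : Antivary f g) (i j : ι) : f i * g i + f j * g j ≤ f i * g j + f j * g i := by
  rcases lt_trichotomy (g i) (g j) with h | h | h
  · simpa only [add_comm] using
      _root_.mul_add_mul_le_mul_add_mul_of_canonicallyOrderedAdd (hfg h) h.le
  · rw [h]
  · exact _root_.mul_add_mul_le_mul_add_mul_of_canonicallyOrderedAdd (hfg h) h.le

theorem ENNReal.tsum_mul_tsum_mul_mul_le_of_antivary {ι : Type*} (p : ι → ℝ≥0∞)
    {f g : ι → ℝ≥0∞} (hfg : Antivary f g) :
    (∑' i, p i) * ∑' i, p i * (f i * g i) ≤ (∑' i, p i * f i) * ∑' i, p i * g i := by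
  have diag : ∑' i, ∑' j, p i * (f i * g i) * p j = (∑' i, p i) * ∑' i, p i * (f i * g i) := by
    simp only [ENNReal.tsum_mul_right, mul_comm]
  have cross : ∑' i, ∑' j, p i * f i * (p j * g j) = (∑' i, p i * f i) * ∑' i, p i * g i := by
    simp only [ENNReal.tsum_mul_left, ENNReal.tsum_mul_right]
  have symmetrize : ∀ x : ι → ι → ℝ≥0∞,
      ∑' i, ∑' j, (x i j + x j i) = 2 * ∑' i, ∑' j, x i j := by
    intro x
    simp only [ENNReal.tsum_add]
    rw [ENNReal.tsum_comm (f := fun j i => x i j), two_mul]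
  rw [← diag, ← cross, ← ENNReal.mul_le_mul_iff_right two_ne_zero ENNReal.ofNat_ne_top,
    ← symmetrize, ← symmetrize]
  refine ENNReal.tsum_le_tsum fun i => ENNReal.tsum_le_tsum fun j => ?_
  calc _ = p i * p j * (f i * g i + f j * g j) := by ring
    _ ≤ p i * p j * (f i * g j + f j * g i) :=
      mul_le_mul_right (hfg.mul_add_mul_le_mul_add_mul_of_canonicallyOrderedAdd i j) _
    _ = _ := by ring

theorem measure_setOf_mem_eq_tsum {Ω β : Type*} [MeasurableSpace Ω] [MeasurableSpace β]
    [Countable β] [MeasurableSingletonClass β] (μ : Measure Ω) {X : Ω → β} (hX : Measurable X)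
    {C : β → Set Ω} (hC : ∀ b, MeasurableSet (C b)) :
    μ {ω | ω ∈ C (X ω)} = ∑' b, μ (X ⁻¹' {b} ∩ C b) := by
  have hunion : {ω | ω ∈ C (X ω)} = ⋃ b, X ⁻¹' {b} ∩ C b := by
    ext ω; simp
  rw [hunion, measure_iUnion _ fun b => (hX (measurableSet_singleton b)).inter (hC b)]
  exact fun b b' hbb' => (pairwise_disjoint_fiber X hbb').mono
    Set.inter_subset_left Set.inter_subset_left

theorem ProbabilityTheory.iIndepFun.measure_inter_inter_eq_mul {Ω ι β : Type*} [MeasurableSpace Ω]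
    [MeasurableSpace β] [Fintype ι] [DecidableEq ι] {μ : Measure Ω} [IsProbabilityMeasure μ]
    {X : Ω → β} {Y : ι → Ω → β} (h : iIndepFun (fun o : Option ι => o.elim X Y) μ) (i₀ : ι)
    {S P Q : Set β} (hS : MeasurableSet S) (hP : MeasurableSet P) (hQ : MeasurableSet Q) :
    μ (X ⁻¹' S ∩ (Y i₀ ⁻¹' P ∩ {ω | ∀ i, i ≠ i₀ → Y i ω ∈ Q})) =
      μ (X ⁻¹' S) * (μ (Y i₀ ⁻¹' P) * μ {ω | ∀ i, i ≠ i₀ → Y i ω ∈ Q}) := by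
  have key : ∀ {S P : Set β}, MeasurableSet S → MeasurableSet P →
      μ (X ⁻¹' S ∩ (Y i₀ ⁻¹' P ∩ {ω | ∀ i, i ≠ i₀ → Y i ω ∈ Q})) =
        μ (X ⁻¹' S) * (μ (Y i₀ ⁻¹' P) * ∏ i : {i // i ≠ i₀}, μ (Y i ⁻¹' Q)) := by
    intro S P hS hP
    have hprod := h.meas_iInter
      (s := fun o => o.elim X Y ⁻¹' o.elim S fun i => if i = i₀ then P else Q)
      fun o => ⟨_, by rcases o with _ | i; exacts [hS, by dsimp; split_ifs <;> assumption], rfl⟩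
    rw [Fintype.prod_option, Fintype.prod_eq_mul_prod_subtype_ne _ i₀, Set.iInter_option]
      at hprod
    simp only [Option.elim, if_pos] at hprod
    convert hprod using 3
    swap
    · exact Finset.prod_congr rfl fun i _ => by rw [if_neg i.2]
    ext ω
    simp only [Set.mem_inter_iff, Set.mem_iInter, Set.mem_preimage, Set.mem_ofPred_eq]
    constructor
    · rintro ⟨hi₀, hne⟩ i
      split_ifs with hi
      exacts [hi ▸ hi₀, hne i hi]
    · intro hall
      exact ⟨by simpa using hall i₀, fun i hi => by simpa [hi] using hall i⟩
  have hrest := key MeasurableSet.univ MeasurableSet.univ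
  simp only [Set.preimage_univ, Set.univ_inter, measure_univ, one_mul] at hrest
  rw [key hS hP, hrest]

theorem ProbabilityTheory.iIndepFun.measure_setOf_mem_and_forall_ne_eq_tsum {Ω ι β : Type*}
    [MeasurableSpace Ω] [MeasurableSpace β] [Countable β] [MeasurableSingletonClass β]
    [Fintype ι] [DecidableEq ι] {μ : Measure Ω} [IsProbabilityMeasure μ] {X : Ω → β}
    {Y : ι → Ω → β} (h : iIndepFun (fun o : Option ι => o.elim X Y) μ) (hX : Measurable X)
    (hY : ∀ i, Measurable (Y i)) (i₀ : ι) {P Q : β → Set β} (hP : ∀ b, MeasurableSet (P b))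
    (hQ : ∀ b, MeasurableSet (Q b)) :
    μ {ω | Y i₀ ω ∈ P (X ω) ∧ ∀ i, i ≠ i₀ → Y i ω ∈ Q (X ω)} =
      ∑' b, μ (X ⁻¹' {b}) * (μ (Y i₀ ⁻¹' P b) * μ {ω | ∀ i, i ≠ i₀ → Y i ω ∈ Q b}) := by
  have hmeas (b : β) : MeasurableSet {ω | ∀ i, i ≠ i₀ → Y i ω ∈ Q b} := by
    simp only [Set.ofPred_forall]
    exact .iInter fun i => .iInter fun _ => hY i (hQ b)
  refine (measure_setOf_mem_eq_tsum μ hX (C := fun b => Y i₀ ⁻¹' P b ∩ _)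
    fun b => (hY i₀ (hP b)).inter (hmeas b)).trans (tsum_congr fun b => ?_)
  exact h.measure_inter_inter_eq_mul i₀ (measurableSet_singleton b) (hP b) (hQ b)

theorem stmt_7_general {Ω : Type*} [MeasurableSpace Ω] (μ : Measure Ω) [IsProbabilityMeasure μ]
    (k : ℕ)
    (TR : Ω → ℕ) (T : Fin (k + 1) → Ω → ℕ)
    (hTR : Measurable TR) (hT : ∀ i, Measurable (T i))
    (hindep : iIndepFun
      (fun o : Option (Fin (k + 1)) => o.elim TR T) μ) :
    μ {ω | T 0 ω ≤ TR ω ∧ ∀ i, i ≠ 0 → TR ω < T i ω} ≤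
      μ {ω | T 0 ω ≤ TR ω} * μ {ω | ∀ i, i ≠ 0 → TR ω < T i ω} := by
  have hcond (P Q : ℕ → Set ℕ) := hindep.measure_setOf_mem_and_forall_ne_eq_tsum hTR hT 0
    (P := P) (Q := Q) (fun _ => .of_discrete) (fun _ => .of_discrete)
  set F : ℕ → ℝ≥0∞ := fun t => μ (T 0 ⁻¹' Set.Iic t)
  set G : ℕ → ℝ≥0∞ := fun t => μ {ω | ∀ i, i ≠ 0 → T i ω ∈ Set.Ioi t}
  have hF : Monotone F := fun s t hst => measure_mono fun ω hω => le_trans hω hst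
  have hG : Antitone G := fun s t hst => measure_mono fun ω hω i hi => lt_of_le_of_lt hst (hω i hi)
  have hsum : ∑' t, μ (TR ⁻¹' {t}) = 1 := by
    simpa using (measure_setOf_mem_eq_tsum μ hTR fun _ => MeasurableSet.univ).symm
  have hAB : μ {ω | T 0 ω ≤ TR ω ∧ ∀ i, i ≠ 0 → TR ω < T i ω} =
      ∑' t, μ (TR ⁻¹' {t}) * (F t * G t) :=
    hcond Set.Iic Set.Ioi
  have hA : μ {ω | T 0 ω ≤ TR ω} = ∑' t, μ (TR ⁻¹' {t}) * F t := by
    simpa using hcond Set.Iic fun _ => Set.univ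
  have hB : μ {ω | ∀ i, i ≠ 0 → TR ω < T i ω} = ∑' t, μ (TR ⁻¹' {t}) * G t := by
    simpa [G] using hcond (fun _ => Set.univ) Set.Ioi
  rw [hAB, hA, hB]
  calc _ = (∑' t, μ (TR ⁻¹' {t})) * ∑' t, μ (TR ⁻¹' {t}) * (F t * G t) := by rw [hsum, one_mul]
    _ ≤ _ := ENNReal.tsum_mul_tsum_mul_mul_le_of_antivary _ (hF.antivary hG)

/-- Let `T_R` be a geometric recovery time with parameter `γ` and `T_0, …, T_k`
geometric infection times with parameters `β_0, …, β_k`, all mutually independent.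
Then `P(T_0 ≤ T_R and T_i > T_R for all i ≠ 0) ≤ P(T_0 ≤ T_R) · P(T_i > T_R for all i ≠ 0)`. -/
theorem stmt_7 {Ω : Type*} [MeasurableSpace Ω] (μ : Measure Ω) [IsProbabilityMeasure μ]
    (k : ℕ) (γ : ℝ) (hγ0 : 0 < γ) (hγ1 : γ ≤ 1)
    (β : Fin (k + 1) → ℝ) (hβ : ∀ i, 0 < β i ∧ β i ≤ 1)
    (TR : Ω → ℕ) (T : Fin (k + 1) → Ω → ℕ)
    (hTR : Measurable TR) (hT : ∀ i, Measurable (T i))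
    (hTRdist : ∀ t : ℕ, 1 ≤ t → μ {ω | TR ω = t} = ENNReal.ofReal (γ * (1 - γ) ^ (t - 1)))
    (hTdist : ∀ i, ∀ t : ℕ, 1 ≤ t →
      μ {ω | T i ω = t} = ENNReal.ofReal (β i * (1 - β i) ^ (t - 1)))
    (hindep : iIndepFun
      (fun o : Option (Fin (k + 1)) => o.elim TR T) μ) :
    μ {ω | T 0 ω ≤ TR ω ∧ ∀ i, i ≠ 0 → TR ω < T i ω} ≤
      μ {ω | T 0 ω ≤ TR ω} * μ {ω | ∀ i, i ≠ 0 → TR ω < T i ω} :=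
  stmt_7_general μ k TR T hTR hT hindep
end

section
/- In the SIR live-edge model, for every subset E' ⊆ E and every edge e ∈ E \ E', it holds that P(e ∈ 𝒢_SIR and E' ∩ 𝒢_SIR = ∅) ≤ P(e ∈ 𝒢_SIR) · P(E' ∩ 𝒢_SIR = ∅); in particular, whenever P(E' ∩ 𝒢_SIR = ∅) > 0, the conditional probability P(e ∈ 𝒢_SIR | E' ∩ 𝒢_SIR = ∅) is at most P(e ∈ 𝒢_SIR). -/
/-!
Let `u` be the tail of `e` and fix all variables except `R u`. The event that `e` is live is
`{R u ≥ I e}`, an upper set in `R u`; the event that `E'` is blocked is `{R u < I f}` for the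
edges `f ∈ E'` with tail `u`, intersected with an event not involving `R u`, hence a lower set in
`R u`. For a single real variable an upper and a lower set are negatively correlated: either they
are disjoint, or they cover everything and `P(A ∩ B) = P(A) + P(B) - 1 ≤ P(A) P(B)`. The
thresholds `I e` and the remaining variables are independent of `R u` and of each other, so
averaging over them preserves the inequality.
-/

open MeasureTheory ProbabilityTheory

/-- `u` reaches `v` in the edge set `H`. -/
def reaches {V : Type*} (H : Finset (V × V)) (u v : V) : Prop :=
  Relation.ReflTransGen (fun x y => (x, y) ∈ H) u v

open Set Function

lemma IsUpperSet.union_eq_univ_of_inter_nonempty {α : Type*} [LinearOrder α] {U L : Set α}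
    (hU : IsUpperSet U) (hL : IsLowerSet L) (h : (U ∩ L).Nonempty) : U ∪ L = univ := by
  obtain ⟨y, hyU, hyL⟩ := h
  refine eq_univ_of_forall fun x => ?_
  rcases le_total x y with hxy | hyx
  exacts [Or.inr (hL hxy hyL), Or.inl (hU hyx hyU)]

namespace ProbabilityTheory

variable {Ω α β γ : Type*} [MeasurableSpace Ω] {μ : Measure Ω}
  [MeasurableSpace α] [MeasurableSpace β] [MeasurableSpace γ]

lemma measure_inter_le_mul_of_union_eq_univ [IsProbabilityMeasure μ] {s t : Set Ω}
    (ht : MeasurableSet t) (hst : s ∪ t = univ) : μ (s ∩ t) ≤ μ s * μ t := by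
  have hsum : μ (s ∩ t) + 1 = μ s + μ t := by
    rw [← measure_union_add_inter s ht, hst, measure_univ, add_comm]
  have hs : μ s = μ s * μ t + μ s * (1 - μ t) := by
    rw [← mul_add, add_tsub_cancel_of_le prob_le_one, mul_one]
  have hle : μ s * (1 - μ t) ≤ 1 - μ t := mul_le_of_le_one_left' prob_le_one
  rw [← ENNReal.add_le_add_iff_right ENNReal.one_ne_top, hsum]
  calc μ s + μ t = μ s * μ t + (μ s * (1 - μ t) + μ t) := by rw [← add_assoc, ← hs]
    _ ≤ μ s * μ t + (1 - μ t + μ t) := by gcongr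
    _ = μ s * μ t + 1 := by rw [tsub_add_cancel_of_le prob_le_one]

lemma measure_preimage_inter_le_mul [IsProbabilityMeasure μ] [LinearOrder α] {X : Ω → α}
    (hX : Measurable X) {U L : Set α} (hLm : MeasurableSet L)
    (hU : IsUpperSet U) (hL : IsLowerSet L) :
    μ (X ⁻¹' (U ∩ L)) ≤ μ (X ⁻¹' U) * μ (X ⁻¹' L) := by
  rcases (U ∩ L).eq_empty_or_nonempty with h | h
  · simp [h]
  · rw [preimage_inter]
    refine measure_inter_le_mul_of_union_eq_univ (hX hLm) ?_
    rw [← preimage_union, hU.union_eq_univ_of_inter_nonempty hL h, preimage_univ]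

lemma IndepFun.measure_setOf_mem_eq_tsum [Countable β] [MeasurableSingletonClass β]
    {X : Ω → α} {Y : Ω → β} (hX : Measurable X) (hY : Measurable Y) (hXY : IndepFun X Y μ)
    {t : β → Set α} (ht : ∀ y, MeasurableSet (t y)) :
    μ {ω | X ω ∈ t (Y ω)} = ∑' y, μ (Y ⁻¹' {y}) * μ (X ⁻¹' t y) := by
  have hunion : {ω | X ω ∈ t (Y ω)} = ⋃ y, Y ⁻¹' {y} ∩ X ⁻¹' t y := by
    ext ω
    simp
  rw [hunion, measure_iUnion]
  · exact tsum_congr fun y =>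
      hXY.symm.measure_inter_preimage_eq_mul _ _ (measurableSet_singleton y) (ht y)
  · exact fun y y' hyy' =>
      (((disjoint_singleton.mpr hyy').preimage Y).inter_left _).inter_right _
  · exact fun y => (hY (measurableSet_singleton y)).inter (hX (ht y))

/-- A one-coordinate Harris inequality. -/
lemma IndepFun.measure_mem_upper_inter_lower_le [IsProbabilityMeasure μ] [LinearOrder α]
    [Countable β] [MeasurableSingletonClass β] [Countable γ] [MeasurableSingletonClass γ]
    {X : Ω → α} {Y : Ω → β} {Z : Ω → γ} (hX : Measurable X) (hY : Measurable Y)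
    (hZ : Measurable Z) (hXYZ : IndepFun X (fun ω => (Y ω, Z ω)) μ) (hYZ : IndepFun Y Z μ)
    {U : β → Set α} {L : γ → Set α} (hUm : ∀ y, MeasurableSet (U y))
    (hLm : ∀ z, MeasurableSet (L z)) (hU : ∀ y, IsUpperSet (U y)) (hL : ∀ z, IsLowerSet (L z)) :
    μ {ω | X ω ∈ U (Y ω) ∩ L (Z ω)} ≤ μ {ω | X ω ∈ U (Y ω)} * μ {ω | X ω ∈ L (Z ω)} := by
  have hXY : IndepFun X Y μ := hXYZ.comp measurable_id measurable_fst
  have hXZ : IndepFun X Z μ := hXYZ.comp measurable_id measurable_snd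
  have hYZm : Measurable fun ω => (Y ω, Z ω) := hY.prodMk hZ
  have hjoint : ∀ p : β × γ, μ ((fun ω => (Y ω, Z ω)) ⁻¹' {p}) =
      μ (Y ⁻¹' {p.1}) * μ (Z ⁻¹' {p.2}) := fun p => by
    rw [← hYZ.measure_inter_preimage_eq_mul _ _ (measurableSet_singleton _)
      (measurableSet_singleton _)]
    congr 1
    ext ω
    simp [Prod.ext_iff]
  rw [hXYZ.measure_setOf_mem_eq_tsum (t := fun p => U p.1 ∩ L p.2) hX hYZm
      fun p => (hUm p.1).inter (hLm p.2),
    hXY.measure_setOf_mem_eq_tsum hX hY hUm, hXZ.measure_setOf_mem_eq_tsum hX hZ hLm]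
  calc ∑' p : β × γ, μ ((fun ω => (Y ω, Z ω)) ⁻¹' {p}) * μ (X ⁻¹' (U p.1 ∩ L p.2))
      ≤ ∑' p : β × γ, (μ (Y ⁻¹' {p.1}) * μ (X ⁻¹' U p.1)) *
          (μ (Z ⁻¹' {p.2}) * μ (X ⁻¹' L p.2)) := by
        refine ENNReal.tsum_le_tsum fun p => ?_
        rw [hjoint, mul_mul_mul_comm]
        gcongr
        exact measure_preimage_inter_le_mul hX (hLm p.2) (hU p.1) (hL p.2)
    _ = _ := by
        rw [ENNReal.tsum_prod (f := fun y z => (μ (Y ⁻¹' {y}) * μ (X ⁻¹' U y)) *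
          (μ (Z ⁻¹' {z}) * μ (X ⁻¹' L z))), ← ENNReal.tsum_mul_right]
        simp_rw [ENNReal.tsum_mul_left]

lemma cond_le_of_measure_inter_le_mul [IsProbabilityMeasure μ] {s t : Set Ω}
    (ht : MeasurableSet t) (hts : μ (t ∩ s) ≤ μ t * μ s) (hs : μ s ≠ 0) : μ[t | s] ≤ μ t := by
  rw [cond_apply' ht, inter_comm]
  calc (μ s)⁻¹ * μ (t ∩ s) ≤ (μ s)⁻¹ * (μ t * μ s) := by gcongr
    _ = μ t := by rw [mul_comm, mul_assoc, ENNReal.mul_inv_cancel hs (measure_ne_top μ s), mul_one]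

lemma iIndepFun.indepFun_comp_of_dependsOn {ι : Type*} {κ : ι → Type*}
    [∀ i, MeasurableSpace (κ i)] [∀ i, Countable (κ i)] [∀ i, MeasurableSingletonClass (κ i)]
    [Nonempty β] [Nonempty γ] {f : ∀ i, Ω → κ i} (hf : iIndepFun f μ)
    (hfm : ∀ i, Measurable (f i)) {S T : Finset ι} (hST : Disjoint S T)
    {φ : (∀ i, κ i) → β} {ψ : (∀ i, κ i) → γ} (hφ : DependsOn φ S) (hψ : DependsOn ψ T) :
    IndepFun (fun ω => φ (f · ω)) (fun ω => ψ (f · ω)) μ := by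
  obtain ⟨φ', rfl⟩ := dependsOn_iff_exists_comp.mp hφ
  obtain ⟨ψ', rfl⟩ := dependsOn_iff_exists_comp.mp hψ
  exact (hf.indepFun_finset S T hST hfm).comp (measurable_of_countable φ')
    (measurable_of_countable ψ')

end ProbabilityTheory

lemma isLowerSet_setOf_forall_update_lt {V : Type*} [DecidableEq V] (E' : Finset (V × V))
    (z : V ⊕ (V × V) → ℕ) (u : V) :
    IsLowerSet {x | ∀ f ∈ E', update z (.inl u) x (.inl f.1) < z (.inr f)} := by
  intro x x' hx'x hx f hf
  have hxf := hx f hf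
  by_cases hfu : f.1 = u
  · simp only [hfu, update_self] at hxf ⊢
    exact hx'x.trans_lt hxf
  · simp_all

theorem stmt_8_general {V : Type*} [Fintype V] [DecidableEq V]
    {Ω : Type*} [MeasurableSpace Ω] (μ : Measure Ω) [IsProbabilityMeasure μ]
    (E : Finset (V × V))
    (R : V → Ω → ℕ) (I : V × V → Ω → ℕ)
    (hRmeas : ∀ v, Measurable (R v)) (hImeas : ∀ e, Measurable (I e))
    (hindep : iIndepFun (Sum.elim R I : V ⊕ (V × V) → Ω → ℕ) μ)
    (G : Ω → Finset (V × V))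
    (hG : ∀ ω, G ω = E.filter (fun e => I e ω ≤ R e.1 ω))
    (E' : Finset (V × V)) (hE' : E' ⊆ E) (e : V × V) (he : e ∈ E \ E') :
    μ {ω | e ∈ G ω ∧ ∀ f ∈ E', f ∉ G ω} ≤
        μ {ω | e ∈ G ω} * μ {ω | ∀ f ∈ E', f ∉ G ω} ∧
    (μ {ω | ∀ f ∈ E', f ∉ G ω} ≠ 0 →
      ProbabilityTheory.cond μ {ω | ∀ f ∈ E', f ∉ G ω} {ω | e ∈ G ω} ≤ μ {ω | e ∈ G ω}) := by
  obtain ⟨heE, heE'⟩ := Finset.mem_sdiff.mp he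
  set u := e.1
  have hRI : ∀ j, Measurable (Sum.elim R I j) := fun j => j.rec hRmeas hImeas
  -- erasing the coordinates of `R u` and `I e` leaves a configuration independent of both
  let rest : (V ⊕ (V × V) → ℕ) → V ⊕ (V × V) → ℕ :=
    fun w => update (update w (.inl u) 0) (.inr e) 0
  let L : (V ⊕ (V × V) → ℕ) → Set ℕ :=
    fun z => {x | ∀ f ∈ E', update z (.inl u) x (.inl f.1) < z (.inr f)}
  have hlive : {ω | e ∈ G ω} = {ω | R u ω ∈ Ici (I e ω)} := by
    ext ω
    simp [hG, heE, u]
  have hblocked : {ω | ∀ f ∈ E', f ∉ G ω} = {ω | R u ω ∈ L (rest (Sum.elim R I · ω))} := by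
    ext ω
    refine forall₂_congr fun f hf => ?_
    have hfe : f ≠ e := fun h => heE' (h ▸ hf)
    by_cases hfu : f.1 = u <;> simp [hG, hE' hf, hfu, hfe, rest]
  have hrest : DependsOn rest ((Finset.univ.erase (Sum.inr e)).erase (Sum.inl u)) :=
    fun x y hxy => by
      funext j
      simp only [rest, update_apply]
      split_ifs <;> first | rfl | exact hxy j (by simp [*])
  have hindepX : IndepFun (R u) (fun ω => (I e ω, rest (Sum.elim R I · ω))) μ :=
    hindep.indepFun_comp_of_dependsOn (S := {.inl u}) (T := Finset.univ.erase (.inl u))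
      (φ := fun w => w (.inl u)) (ψ := fun w => (w (.inr e), rest w)) hRI
      (Finset.disjoint_singleton_left.mpr (Finset.notMem_erase _ _))
      (fun x y hxy => hxy _ (by simp))
      (fun x y hxy => Prod.ext (hxy _ (by simp)) (hrest fun j hj => hxy j (by simp_all)))
  have hindepY : IndepFun (I e) (fun ω => rest (Sum.elim R I · ω)) μ :=
    hindep.indepFun_comp_of_dependsOn (S := {.inr e})
      (T := (Finset.univ.erase (.inr e)).erase (.inl u)) (φ := fun w => w (.inr e)) (ψ := rest)
      hRI (Finset.disjoint_singleton_left.mpr (by simp)) (fun x y hxy => hxy _ (by simp)) hrest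
  have hcorr := hindepX.measure_mem_upper_inter_lower_le (hRmeas u) (hImeas e)
    ((measurable_of_countable rest).comp (measurable_pi_lambda _ hRI)) hindepY
    (fun _ => .of_discrete) (fun _ => .of_discrete) (fun n => isUpperSet_Ici n)
    (fun z => isLowerSet_setOf_forall_update_lt E' z u)
  rw [ofPred_and, hlive, hblocked]
  exact ⟨hcorr, cond_le_of_measure_inter_le_mul (measurableSet_le (hImeas e) (hRmeas u)) hcorr⟩

/-- Positive correlation in the SIR live-edge model: for any `E' ⊆ E` and any edge
`e ∈ E \ E'`, `P(e ∈ 𝒢_SIR and E' ∩ 𝒢_SIR = ∅) ≤ P(e ∈ 𝒢_SIR) · P(E' ∩ 𝒢_SIR = ∅)`;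
in particular the conditional probability of `e` being live given that all edges of
`E'` are blocked is at most the unconditional one. -/
theorem stmt_8 {V : Type*} [Fintype V] [DecidableEq V]
    {Ω : Type*} [MeasurableSpace Ω] (μ : Measure Ω) [IsProbabilityMeasure μ]
    (E : Finset (V × V)) (β : V × V → ℝ) (γ : V → ℝ)
    (hβ : ∀ e ∈ E, 0 < β e ∧ β e ≤ 1) (hγ : ∀ v, 0 < γ v ∧ γ v ≤ 1)
    (R : V → Ω → ℕ) (I : V × V → Ω → ℕ)
    (hRmeas : ∀ v, Measurable (R v)) (hImeas : ∀ e, Measurable (I e))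
    (hRdist : ∀ v, ∀ t : ℕ, 1 ≤ t →
      μ {ω | R v ω = t} = ENNReal.ofReal (γ v * (1 - γ v) ^ (t - 1)))
    (hIdist : ∀ e ∈ E, ∀ t : ℕ, 1 ≤ t →
      μ {ω | I e ω = t} = ENNReal.ofReal (β e * (1 - β e) ^ (t - 1)))
    (hindep : iIndepFun (Sum.elim R I : V ⊕ (V × V) → Ω → ℕ) μ)
    (G : Ω → Finset (V × V))
    (hG : ∀ ω, G ω = E.filter (fun e => I e ω ≤ R e.1 ω))
    (E' : Finset (V × V)) (hE' : E' ⊆ E) (e : V × V) (he : e ∈ E \ E') :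
    μ {ω | e ∈ G ω ∧ ∀ f ∈ E', f ∉ G ω} ≤
        μ {ω | e ∈ G ω} * μ {ω | ∀ f ∈ E', f ∉ G ω} ∧
    (μ {ω | ∀ f ∈ E', f ∉ G ω} ≠ 0 →
      ProbabilityTheory.cond μ {ω | ∀ f ∈ E', f ∉ G ω} {ω | e ∈ G ω} ≤ μ {ω | e ∈ G ω}) :=
  stmt_8_general μ E R I hRmeas hImeas hindep G hG E' hE' e he
end

section
/- Let V be a finite set, E ⊆ V × V, with SIR parameters β : E → (0,1], γ : V → (0,1] and matching IC parameters p. Then for every seed set S ⊆ V and every vertex v ∈ V, P(some s ∈ S reaches v in 𝒢_IC) ≥ P(some s ∈ S reaches v in 𝒢_SIR); equivalently P(S ∩ RR_{𝒢_IC}(v) ≠ ∅) ≥ P(S ∩ RR_{𝒢_SIR}(v) ≠ ∅). -/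
open MeasureTheory ProbabilityTheory ENNReal

/-!
Conditionally on the recovery times `r`, the SIR live-edge graph is an IC live-edge graph in which
an edge `e` out of `u` is live with probability `q_e(r u) = 1 - (1 - β e) ^ r u`; this is monotone
in `r u`, and its mean under the geometric law of `R u` is the matching `p e`. Writing `Φ` for the
multilinear extension of the indicator of "some seed reaches `v`", the IC probability is `Φ(p)` and
the SIR one is `𝔼_r Φ(q(r))`. Replacing `q_i` by `p_i` one edge at a time never decreases this
expectation: `Φ` is affine in `θ_i`, and its slope is antitone in `r u` because reachability has
diminishing returns along edges with a common tail (a shortest path leaves each vertex once).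
Chebyshev's sum inequality for the increasing `q_i(r u)` and the decreasing slope then bounds
`𝔼[q_i · slope]` by `p_i · 𝔼[slope]`.
-/

namespace LiveEdge

open Finset

section Reachability

variable {V : Type*} {H : Finset (V × V)} {a v : V}

theorem reaches_mono {H' : Finset (V × V)} (h : H ⊆ H') (hav : reaches H a v) :
    reaches H' a v :=
  Relation.ReflTransGen.mono (fun _ _ hxy => h hxy) _ _ hav

theorem reaches_insert_of_reaches [DecidableEq V] {k : V × V} (hak : reaches H a k.1)
    (hkv : reaches H k.2 v) : reaches (insert k H) a v :=
  ((reaches_mono (subset_insert k H) hak).tail (mem_insert_self k H)).trans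
    (reaches_mono (subset_insert k H) hkv)

/-- Shortcut a path at `x`: reach `x` for the first time, then leave it along the last edge of `F`
that the path uses. -/
theorem reaches_union_of_forall_fst_eq [DecidableEq V] {F : Finset (V × V)} {x : V}
    (hF : ∀ k ∈ F, k.1 = x) (h : reaches (F ∪ H) a v) :
    reaches H a v ∨ ∃ k ∈ F, reaches H a x ∧ reaches H k.2 v := by
  induction h using Relation.ReflTransGen.head_induction_on with
  | refl => exact .inl .refl
  | @head b c hbc _ ih =>
    rcases mem_union.1 hbc with hF' | hH
    · have hb : b = x := hF _ hF'
      subst hb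
      rcases ih with hcv | ⟨k, hk, -, hkv⟩
      · exact .inr ⟨(b, c), hF', .refl, hcv⟩
      · exact .inr ⟨k, hk, .refl, hkv⟩
    · rcases ih with hcv | ⟨k, hk, hcx, hkv⟩
      · exact .inl (hcv.head hH)
      · exact .inr ⟨k, hk, hcx.head hH, hkv⟩

theorem reaches_insert_or_reaches_insert [DecidableEq V] {i j : V × V} (hij : i.1 = j.1)
    (h : reaches (insert i (insert j H)) a v) :
    reaches (insert i H) a v ∨ reaches (insert j H) a v := by
  have hF : ∀ k ∈ ({i, j} : Finset (V × V)), k.1 = i.1 := by simp [hij]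
  rcases reaches_union_of_forall_fst_eq hF (by simpa [insert_union] using h) with
    hav | ⟨k, hk, hax, hkv⟩
  · exact .inl (reaches_mono (subset_insert i H) hav)
  · rcases mem_insert.1 hk with rfl | hk
    · exact .inl (reaches_insert_of_reaches hax hkv)
    · rw [mem_singleton.1 hk] at hkv
      exact .inr (reaches_insert_of_reaches (hij ▸ hax) hkv)

end Reachability

theorem isUpperSet_setOf_reaches {V : Type*} (S : Finset V) (v : V) :
    IsUpperSet {T : Finset (V × V) | ∃ s ∈ S, reaches T s v} :=
  fun _ _ hT ⟨s, hs, h⟩ => ⟨s, hs, reaches_mono hT h⟩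

theorem indicator_one_mem_Icc {α : Type*} (Q : Set α) (a : α) :
    Q.indicator (1 : α → ℝ) a ∈ Set.Icc 0 1 :=
  ⟨Set.indicator_nonneg (fun _ _ => zero_le_one) a,
    Set.indicator_le_self' (fun _ _ => zero_le_one) a⟩

theorem monotone_indicator_one {α : Type*} [Preorder α] {Q : Set α} (hQ : IsUpperSet Q) :
    Monotone (Q.indicator (1 : α → ℝ)) := by
  intro a b hab
  by_cases ha : a ∈ Q
  · rw [Set.indicator_of_mem ha, Set.indicator_of_mem (hQ hab ha)]
    rfl
  · rw [Set.indicator_of_notMem ha]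
    exact Set.indicator_nonneg (fun _ _ => zero_le_one) b

section MultilinearExtension

variable {α : Type*} [DecidableEq α]

/-- The expectation of `d` on the random subset of `E` that keeps each `e` independently with
probability `θ e`. -/
def multilinearExt (E : Finset α) (d : Finset α → ℝ) (θ : α → ℝ) : ℝ :=
  ∑ T ∈ E.powerset, d T * ∏ e ∈ E, if e ∈ T then θ e else 1 - θ e

variable {E : Finset α} {d d' : Finset α → ℝ} {θ θ' : α → ℝ}

theorem multilinearExt_congr (h : ∀ e ∈ E, θ e = θ' e) :
    multilinearExt E d θ = multilinearExt E d θ' :=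
  sum_congr rfl fun _ _ => by rw [prod_congr rfl fun e he => by rw [h e he]]

theorem multilinearExt_insert {i : α} (hi : i ∉ E) (d : Finset α → ℝ) (θ : α → ℝ) :
    multilinearExt (insert i E) d θ =
      θ i * multilinearExt E (fun T => d (insert i T)) θ +
        (1 - θ i) * multilinearExt E d θ := by
  unfold multilinearExt
  rw [sum_powerset_insert hi, add_comm, mul_sum, mul_sum]
  congr 1 <;> refine sum_congr rfl fun T hT => ?_
  · have hE : ∀ e ∈ E, (e ∈ insert i T ↔ e ∈ T) := fun e he =>
      mem_insert.trans (or_iff_right (ne_of_mem_of_not_mem he hi))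
    rw [prod_insert hi, if_pos (mem_insert_self i T),
      prod_congr rfl fun e he => by rw [if_congr (hE e he) rfl rfl]]
    ring
  · rw [prod_insert hi, if_neg fun h => hi (mem_powerset.1 hT h)]
    ring

theorem multilinearExt_const (c : ℝ) : multilinearExt E (fun _ => c) θ = c := by
  induction E using Finset.induction_on with
  | empty => simp [multilinearExt]
  | insert i E hi ih => rw [multilinearExt_insert hi, ih]; ring

theorem prod_ite_nonneg (hθ : ∀ e ∈ E, θ e ∈ Set.Icc 0 1) (T : Finset α) :
    0 ≤ ∏ e ∈ E, if e ∈ T then θ e else 1 - θ e :=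
  prod_nonneg fun e he => by
    obtain ⟨h0, h1⟩ := hθ e he
    split_ifs <;> linarith

theorem multilinearExt_mono (hθ : ∀ e ∈ E, θ e ∈ Set.Icc 0 1) (h : d ≤ d') :
    multilinearExt E d θ ≤ multilinearExt E d' θ :=
  sum_le_sum fun T _ => mul_le_mul_of_nonneg_right (h T) (prod_ite_nonneg hθ T)

theorem multilinearExt_nonneg (hθ : ∀ e ∈ E, θ e ∈ Set.Icc 0 1) (hd : 0 ≤ d) :
    0 ≤ multilinearExt E d θ :=
  (multilinearExt_const (E := E) (θ := θ) 0).symm.trans_le (multilinearExt_mono hθ hd)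

theorem multilinearExt_le_one (hθ : ∀ e ∈ E, θ e ∈ Set.Icc 0 1) (hd : d ≤ 1) :
    multilinearExt E d θ ≤ 1 :=
  (multilinearExt_mono hθ hd).trans_eq (multilinearExt_const 1)

theorem multilinearExt_mem_Icc (hθ : ∀ e ∈ E, θ e ∈ Set.Icc 0 1)
    (hd : ∀ T, d T ∈ Set.Icc 0 1) :
    multilinearExt E d θ ∈ Set.Icc 0 1 :=
  ⟨multilinearExt_nonneg hθ fun T => (hd T).1, multilinearExt_le_one hθ fun T => (hd T).2⟩

theorem multilinearExt_sub :
    multilinearExt E d θ - multilinearExt E d' θ = multilinearExt E (d - d') θ := by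
  simp only [multilinearExt, ← sum_sub_distrib, Pi.sub_apply, sub_mul]

theorem multilinearExt_le_of_le (hθ : ∀ e ∈ E, θ e ∈ Set.Icc 0 1)
    (hθ' : ∀ e ∈ E, θ' e ∈ Set.Icc 0 1) (hle : ∀ e ∈ E, θ e ≤ θ' e)
    (hd : ∀ e ∈ E, θ e < θ' e → ∀ T, d (insert e T) ≤ d T) :
    multilinearExt E d θ' ≤ multilinearExt E d θ := by
  induction E using Finset.induction_on generalizing d with
  | empty => simp [multilinearExt]
  | insert i E hi ih =>
    have hθE : ∀ e ∈ E, θ e ∈ Set.Icc 0 1 := fun e he => hθ e (mem_insert_of_mem he)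
    have hθ'E : ∀ e ∈ E, θ' e ∈ Set.Icc 0 1 := fun e he => hθ' e (mem_insert_of_mem he)
    have hleE : ∀ e ∈ E, θ e ≤ θ' e := fun e he => hle e (mem_insert_of_mem he)
    have hA := ih (d := fun T => d (insert i T)) hθE hθ'E hleE fun e he hlt T => by
      simpa only [insert_comm e i] using hd e (mem_insert_of_mem he) hlt (insert i T)
    have hB := ih hθE hθ'E hleE fun e he => hd e (mem_insert_of_mem he)
    rw [multilinearExt_insert hi, multilinearExt_insert hi]
    obtain ⟨h0, h1⟩ := hθ' i (mem_insert_self i E)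
    rcases (hle i (mem_insert_self i E)).eq_or_lt with heq | hlt
    · rw [heq]
      nlinarith
    · have hAB := multilinearExt_mono hθE fun T => hd i (mem_insert_self i E) hlt T
      nlinarith

theorem ofReal_multilinearExt_indicator (hθ : ∀ e ∈ E, θ e ∈ Set.Icc 0 1)
    (Q : Set (Finset α)) :
    ENNReal.ofReal (multilinearExt E (Q.indicator 1) θ) = ∑ T ∈ E.powerset,
      Q.indicator 1 T * ∏ e ∈ E, ENNReal.ofReal (if e ∈ T then θ e else 1 - θ e) := by
  rw [multilinearExt, ENNReal.ofReal_sum_of_nonneg fun T _ =>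
    mul_nonneg (indicator_one_mem_Icc Q T).1 (prod_ite_nonneg hθ T)]
  refine sum_congr rfl fun T _ => ?_
  by_cases hT : T ∈ Q
  · rw [Set.indicator_of_mem hT, Set.indicator_of_mem hT, Pi.one_apply, Pi.one_apply, one_mul,
      one_mul, ENNReal.ofReal_prod_of_nonneg fun e he => ?_]
    obtain ⟨h0, h1⟩ := hθ e he
    split_ifs <;> linarith
  · simp [hT]

end MultilinearExtension

section Chebyshev

variable {w a b : ℕ → ℝ}

theorem summable_mul_of_mem_Icc (hw0 : ∀ n, 0 ≤ w n) (hw : Summable w) {f : ℕ → ℝ}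
    (hf : ∀ n, f n ∈ Set.Icc 0 1) : Summable fun n => w n * f n :=
  hw.of_nonneg_of_le (fun n => mul_nonneg (hw0 n) (hf n).1)
    fun n => mul_le_of_le_one_right (hw0 n) (hf n).2

/-- Chebyshev's sum inequality for a probability weight `w`. -/
theorem tsum_mul_mul_le_of_monotone_of_antitone (hw0 : ∀ n, 0 ≤ w n) (hw : HasSum w 1)
    (ha : Monotone a) (hb : Antitone b) (ha01 : ∀ n, a n ∈ Set.Icc 0 1)
    (hb01 : ∀ n, b n ∈ Set.Icc 0 1) :
    ∑' n, w n * (a n * b n) ≤ (∑' n, w n * a n) * ∑' n, w n * b n := by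
  have hsum {f : ℕ → ℝ} (hf : ∀ n, f n ∈ Set.Icc 0 1) :
      HasSum (fun n => w n * f n) (∑' n, w n * f n) :=
    (summable_mul_of_mem_Icc hw0 hw.summable hf).hasSum
  have hprod {f g : ℕ → ℝ} {s t : ℝ} (hf : ∀ n, 0 ≤ f n) (hg : ∀ n, 0 ≤ g n)
      (hfs : HasSum f s) (hgt : HasSum g t) :
      HasSum (fun q : ℕ × ℕ => f q.1 * g q.2) (s * t) :=
    hfs.mul hgt (hfs.summable.mul_of_nonneg hgt.summable hf hg)
  have hw01 {f : ℕ → ℝ} (hf : ∀ n, f n ∈ Set.Icc 0 1) n : 0 ≤ w n * f n :=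
    mul_nonneg (hw0 n) (hf n).1
  have hab01 n : a n * b n ∈ Set.Icc 0 1 :=
    ⟨mul_nonneg (ha01 n).1 (hb01 n).1, mul_le_one₀ (ha01 n).2 (hb01 n).1 (hb01 n).2⟩
  set A := ∑' n, w n * a n
  set B := ∑' n, w n * b n
  set C := ∑' n, w n * (a n * b n)
  have hcov : HasSum (fun q : ℕ × ℕ => w q.1 * w q.2 * ((a q.1 - a q.2) * (b q.1 - b q.2)))
      (C * 1 + 1 * C - A * B - B * A) := by
    refine ((((hprod (hw01 hab01) hw0 (hsum hab01) hw).add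
      (hprod hw0 (hw01 hab01) hw (hsum hab01))).sub
      (hprod (hw01 ha01) (hw01 hb01) (hsum ha01) (hsum hb01))).sub
      (hprod (hw01 hb01) (hw01 ha01) (hsum hb01) (hsum ha01))).congr_fun fun q => ?_
    ring
  have hterm (q : ℕ × ℕ) : w q.1 * w q.2 * ((a q.1 - a q.2) * (b q.1 - b q.2)) ≤ 0 := by
    refine mul_nonpos_of_nonneg_of_nonpos (mul_nonneg (hw0 _) (hw0 _)) ?_
    rcases le_total q.1 q.2 with h | h
    · exact mul_nonpos_of_nonpos_of_nonneg (sub_nonpos.2 (ha h)) (sub_nonneg.2 (hb h))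
    · exact mul_nonpos_of_nonneg_of_nonpos (sub_nonneg.2 (ha h)) (sub_nonpos.2 (hb h))
  linarith [hasSum_le hterm hcov hasSum_zero]

theorem tsum_mul_mix_le_tsum_mul_mix_mean (hw0 : ∀ n, 0 ≤ w n) (hw : HasSum w 1)
    (ha : Monotone a) (ha01 : ∀ n, a n ∈ Set.Icc 0 1) {A B : ℕ → ℝ}
    (hB0 : ∀ n, 0 ≤ B n) (hBA : B ≤ A) (hA1 : ∀ n, A n ≤ 1) (hAB : Antitone (A - B)) :
    ∑' n, w n * (a n * A n + (1 - a n) * B n) ≤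
      ∑' n, w n * ((∑' m, w m * a m) * A n + (1 - ∑' m, w m * a m) * B n) := by
  have hsum {f : ℕ → ℝ} (hf : ∀ n, f n ∈ Set.Icc 0 1) :
      HasSum (fun n => w n * f n) (∑' n, w n * f n) :=
    (summable_mul_of_mem_Icc hw0 hw.summable hf).hasSum
  have hB01 n : B n ∈ Set.Icc 0 1 := ⟨hB0 n, (hBA n).trans (hA1 n)⟩
  have hAB01 n : (A - B) n ∈ Set.Icc 0 1 :=
    ⟨sub_nonneg.2 (hBA n), by rw [Pi.sub_apply]; linarith [hA1 n, hB0 n]⟩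
  have haAB01 n : a n * (A - B) n ∈ Set.Icc 0 1 :=
    ⟨mul_nonneg (ha01 n).1 (hAB01 n).1, mul_le_one₀ (ha01 n).2 (hAB01 n).1 (hAB01 n).2⟩
  have hcheb := tsum_mul_mul_le_of_monotone_of_antitone hw0 hw ha hAB ha01 hAB01
  set π := ∑' m, w m * a m
  calc ∑' n, w n * (a n * A n + (1 - a n) * B n)
      = ∑' n, (w n * B n + w n * (a n * (A - B) n)) :=
        tsum_congr fun n => by simp only [Pi.sub_apply]; ring
    _ = ∑' n, w n * B n + ∑' n, w n * (a n * (A - B) n) :=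
        ((hsum hB01).add (hsum haAB01)).tsum_eq
    _ ≤ ∑' n, w n * B n + π * ∑' n, w n * (A - B) n := add_le_add_right hcheb _
    _ = ∑' n, (w n * B n + π * (w n * (A - B) n)) :=
        ((hsum hB01).add ((hsum hAB01).mul_left π)).tsum_eq.symm
    _ = ∑' n, w n * (π * A n + (1 - π) * B n) :=
        tsum_congr fun n => by simp only [Pi.sub_apply]; ring

theorem tsum_ofReal_mul_ofReal {f : ℕ → ℝ} (hw0 : ∀ n, 0 ≤ w n) (hw : Summable w)
    (hf : ∀ n, f n ∈ Set.Icc 0 1) :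
    ∑' n, ENNReal.ofReal (w n) * ENNReal.ofReal (f n) = ENNReal.ofReal (∑' n, w n * f n) := by
  simp_rw [← ENNReal.ofReal_mul (hw0 _)]
  exact (ENNReal.ofReal_tsum_of_nonneg (fun n => mul_nonneg (hw0 n) (hf n).1)
    (summable_mul_of_mem_Icc hw0 hw hf)).symm

end Chebyshev

section Geometric

/-- `P(X = n)` for `X` geometric on `{1, 2, …}` with success probability `g`. -/
def geomWeight (g : ℝ) (n : ℕ) : ℝ := if n = 0 then 0 else g * (1 - g) ^ (n - 1)

variable {g b : ℝ}

@[simp] theorem geomWeight_zero : geomWeight g 0 = 0 := rfl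

theorem geomWeight_succ (n : ℕ) : geomWeight g (n + 1) = g * (1 - g) ^ n := rfl

theorem geomWeight_nonneg (hg : g ∈ Set.Ioc 0 1) (n : ℕ) : 0 ≤ geomWeight g n := by
  cases n with
  | zero => rfl
  | succ n => exact mul_nonneg hg.1.le (pow_nonneg (by linarith [hg.2]) n)

theorem sum_range_succ_geomWeight (n : ℕ) :
    ∑ s ∈ range (n + 1), geomWeight g s = 1 - (1 - g) ^ n := by
  induction n with
  | zero => simp
  | succ n ih => rw [sum_range_succ, ih, geomWeight_succ, pow_succ]; ring

theorem hasSum_geomWeight_mul_pow (hg : g ∈ Set.Ioc 0 1) {c : ℝ} (hc : c ∈ Set.Icc 0 1) :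
    HasSum (fun n => geomWeight g n * c ^ n) (g * c / (1 - (1 - g) * c)) := by
  obtain ⟨hg0, hg1⟩ := hg
  obtain ⟨hc0, hc1⟩ := hc
  have hr0 : 0 ≤ (1 - g) * c := mul_nonneg (by linarith) hc0
  have hr1 : (1 - g) * c < 1 := by nlinarith
  have h := (hasSum_geometric_of_lt_one hr0 hr1).mul_left (g * c)
  refine (hasSum_nat_add_iff' 1).1 ?_
  rw [sum_range_one, geomWeight_zero, zero_mul, sub_zero, div_eq_mul_inv]
  exact h.congr_fun fun n => by rw [geomWeight_succ, pow_succ, mul_pow]; ring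

theorem hasSum_geomWeight (hg : g ∈ Set.Ioc 0 1) : HasSum (geomWeight g) 1 := by
  have h := hasSum_geomWeight_mul_pow hg (c := 1) ⟨zero_le_one, le_rfl⟩
  simpa [hg.1.ne'] using h

theorem hasSum_geomWeight_mul_one_sub_pow (hg : g ∈ Set.Ioc 0 1) (hb : b ∈ Set.Ioc 0 1) :
    HasSum (fun n => geomWeight g n * (1 - (1 - b) ^ n)) (b / (g + b - g * b)) := by
  have hD : g + b - g * b ≠ 0 := by nlinarith [hg.1, hg.2, hb.1, hb.2]
  have h := (hasSum_geomWeight hg).sub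
    (hasSum_geomWeight_mul_pow hg (c := 1 - b) ⟨by linarith [hb.2], by linarith [hb.1]⟩)
  rw [show 1 - g * (1 - b) / (1 - (1 - g) * (1 - b)) = b / (g + b - g * b) by
    rw [show 1 - (1 - g) * (1 - b) = g + b - g * b by ring]; field_simp; ring] at h
  exact h.congr_fun fun n => by ring

theorem one_sub_one_sub_pow_mem_Icc (hb : b ∈ Set.Ioc 0 1) (n : ℕ) :
    1 - (1 - b) ^ n ∈ Set.Icc 0 1 :=
  ⟨sub_nonneg.2 (pow_le_one₀ (by linarith [hb.2]) (by linarith [hb.1])),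
    sub_le_self 1 (pow_nonneg (by linarith [hb.2]) n)⟩

theorem monotone_one_sub_one_sub_pow (hb : b ∈ Set.Ioc 0 1) :
    Monotone fun n : ℕ => 1 - (1 - b) ^ n :=
  fun _ _ hmn =>
    sub_le_sub_left (pow_le_pow_of_le_one (by linarith [hb.2]) (by linarith [hb.1]) hmn) 1

theorem div_add_sub_mul_mem_Icc (hg : g ∈ Set.Ioc 0 1) (hb : b ∈ Set.Ioc 0 1) :
    b / (g + b - g * b) ∈ Set.Icc 0 1 := by
  obtain ⟨hg0, hg1⟩ := hg
  obtain ⟨hb0, hb1⟩ := hb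
  have hD : 0 < g + b - g * b := by nlinarith
  exact ⟨div_nonneg hb0.le hD.le, (div_le_one hD).2 (by nlinarith)⟩

end Geometric

section Probability

variable {Ω : Type*} [MeasurableSpace Ω] {μ : Measure Ω}

theorem filter_eq_iff_of_subset {α : Type*} {E T : Finset α} (hT : T ⊆ E) {P : α → Prop}
    [DecidablePred P] : E.filter P = T ↔ ∀ e ∈ E, (P e ↔ e ∈ T) := by
  constructor
  · rintro rfl e he
    simp [he]
  · intro h
    ext e
    rw [mem_filter]
    exact ⟨fun ⟨he, hp⟩ => (h e he).1 hp, fun he => ⟨hT he, (h e (hT he)).2 he⟩⟩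

theorem measurableSet_setOf_iff {A : Ω → Prop} (hA : MeasurableSet {ω | A ω}) (P : Prop) :
    MeasurableSet {ω | A ω ↔ P} := by
  by_cases hP : P
  · simpa only [hP, iff_true] using hA
  · simp only [hP, iff_false]
    exact hA.compl

theorem measure_setOf_iff [IsProbabilityMeasure μ] {A : Ω → Prop}
    (hA : MeasurableSet {ω | A ω}) {q : ℝ} (hq : 0 ≤ q)
    (h : μ {ω | A ω} = ENNReal.ofReal q) (P : Prop) [Decidable P] :
    μ {ω | A ω ↔ P} = ENNReal.ofReal (if P then q else 1 - q) := by
  by_cases hP : P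
  · simpa [hP] using h
  · have : {ω | A ω ↔ P} = {ω | A ω}ᶜ := by ext; simp [hP]
    rw [this, prob_compl_eq_one_sub hA, h, if_neg hP, ENNReal.ofReal_sub _ hq, ENNReal.ofReal_one]

theorem measurableSet_filter_eq {α : Type*} {E T : Finset α} (hT : T ⊆ E)
    {P : Ω → α → Prop} [∀ ω, DecidablePred (P ω)]
    (hP : ∀ e ∈ E, MeasurableSet {ω | P ω e}) :
    MeasurableSet {ω | E.filter (P ω) = T} := by
  have : {ω | E.filter (P ω) = T} = ⋂ e ∈ E, {ω | P ω e ↔ e ∈ T} := by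
    ext ω
    simp [filter_eq_iff_of_subset hT]
  rw [this]
  exact E.measurableSet_biInter fun e he => measurableSet_setOf_iff (hP e he) _

theorem measure_mem_eq_sum_indicator_mul {α : Type*} {E : Finset α} {G : Ω → Finset α}
    (hG : ∀ ω, G ω ⊆ E) (hmeas : ∀ T ⊆ E, MeasurableSet {ω | G ω = T})
    (Q : Set (Finset α)) :
    μ {ω | G ω ∈ Q} = ∑ T ∈ E.powerset, Q.indicator 1 T * μ {ω | G ω = T} := by
  classical
  simp only [Set.indicator_apply, Pi.one_apply, ite_mul, one_mul, zero_mul]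
  rw [← sum_filter]
  refine Eq.trans ?_ (sum_measure_preimage_singleton _ fun T hT =>
    hmeas T (mem_powerset.1 (mem_filter.1 hT).1)).symm
  congr 1
  ext ω
  simp [hG ω]

theorem measure_eq_tsum_inter_fiber {β : Type*} [Countable β] {X : Ω → β}
    (hX : ∀ b, MeasurableSet {ω | X ω = b}) {A : Set Ω} (hA : MeasurableSet A) :
    μ A = ∑' b, μ {ω | X ω = b ∧ ω ∈ A} := by
  refine Eq.trans ?_ (measure_iUnion (f := fun b => {ω | X ω = b ∧ ω ∈ A})
    (fun b b' hbb' => Set.disjoint_left.2 fun ω h h' => hbb' (h.1.symm.trans h'.1))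
    fun b => (hX b).inter hA)
  congr 1
  ext ω
  simp

theorem measure_eq_ofReal_geomWeight [IsProbabilityMeasure μ] {X : Ω → ℕ} (hX : Measurable X)
    {g : ℝ} (hg : g ∈ Set.Ioc 0 1)
    (hdist : ∀ t : ℕ, 1 ≤ t → μ {ω | X ω = t} = ENNReal.ofReal (g * (1 - g) ^ (t - 1)))
    (n : ℕ) :
    μ {ω | X ω = n} = ENNReal.ofReal (geomWeight g n) := by
  have hsucc (n : ℕ) : μ {ω | X ω = n + 1} = ENNReal.ofReal (geomWeight g (n + 1)) := by
    simpa [geomWeight_succ] using hdist (n + 1) (Nat.le_add_left 1 n)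
  cases n with
  | succ n => exact hsucc n
  | zero =>
    have htotal : ∑' n, μ {ω | X ω = n} = 1 := by
      rw [← measure_univ (μ := μ), measure_eq_tsum_inter_fiber
        (fun n => hX (measurableSet_singleton n)) MeasurableSet.univ]
      simp
    have htail : ∑' n, μ {ω | X ω = n + 1} = 1 := by
      have h := (hasSum_nat_add_iff' 1).2 (hasSum_geomWeight hg)
      rw [sum_range_one, geomWeight_zero, sub_zero] at h
      simp_rw [hsucc, ← ENNReal.ofReal_tsum_of_nonneg (fun n => geomWeight_nonneg hg _)
        h.summable, h.tsum_eq, ENNReal.ofReal_one]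
    rw [tsum_eq_zero_add' ENNReal.summable, htail] at htotal
    simpa using htotal

theorem measure_le_eq_ofReal_one_sub_pow {X : Ω → ℕ} (hX : Measurable X) {g : ℝ}
    (hg : g ∈ Set.Ioc 0 1)
    (hpmf : ∀ n, μ {ω | X ω = n} = ENNReal.ofReal (geomWeight g n)) (n : ℕ) :
    μ {ω | X ω ≤ n} = ENNReal.ofReal (1 - (1 - g) ^ n) := by
  have hset : {ω | X ω ≤ n} = X ⁻¹' ↑(range (n + 1)) := by
    ext ω
    simp
  rw [hset, ← sum_measure_preimage_singleton _ fun _ _ => hX (measurableSet_singleton _),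
    ← sum_range_succ_geomWeight, ENNReal.ofReal_sum_of_nonneg fun s _ => geomWeight_nonneg hg s]
  exact sum_congr rfl fun s _ => hpmf s

theorem measure_filter_mem_eq_ofReal_multilinearExt [IsProbabilityMeasure μ] {α : Type*}
    [DecidableEq α] {E : Finset α} {B : α → Ω → Bool} (hBmeas : ∀ e, Measurable (B e))
    (hB : iIndepFun B μ) {θ : α → ℝ}
    (hθ : ∀ e ∈ E, θ e ∈ Set.Icc 0 1)
    (hBθ : ∀ e ∈ E, μ {ω | B e ω = true} = ENNReal.ofReal (θ e)) (Q : Set (Finset α)) :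
    μ {ω | E.filter (fun e => B e ω = true) ∈ Q} =
      ENNReal.ofReal (multilinearExt E (Q.indicator 1) θ) := by
  have hBe e : MeasurableSet {ω | B e ω = true} := hBmeas e (measurableSet_singleton true)
  rw [measure_mem_eq_sum_indicator_mul (fun ω => filter_subset _ E)
    (fun T hT => measurableSet_filter_eq hT fun e _ => hBe e), ofReal_multilinearExt_indicator hθ]
  refine sum_congr rfl fun T hT => congrArg _ ?_
  have hevent : {ω | E.filter (fun e => B e ω = true) = T} =
      ⋂ e ∈ E, B e ⁻¹' {b | b = true ↔ e ∈ T} := by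
    ext ω
    simp [filter_eq_iff_of_subset (mem_powerset.1 hT)]
  rw [hevent, hB.measure_inter_preimage_eq_mul E fun _ _ => .of_discrete]
  refine prod_congr rfl fun e he => measure_setOf_iff (hBe e) (hθ e he).1 (hBθ e he) _

variable {V : Type*} [Fintype V] {R : V → Ω → ℕ} {I : V × V → Ω → ℕ}

theorem measure_fiber_inter_filter_eq (hindep : iIndepFun (Sum.elim R I) μ)
    {E T : Finset (V × V)} (hT : T ⊆ E) (r : V → ℕ) :
    μ {ω | (fun u => R u ω) = r ∧ ω ∈ {ω | E.filter (fun e => I e ω ≤ R e.1 ω) = T}} =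
      (∏ u, μ {ω | R u ω = r u}) * ∏ e ∈ E, μ {ω | I e ω ≤ r e.1 ↔ e ∈ T} := by
  have hevent :
      {ω | (fun u => R u ω) = r ∧ ω ∈ {ω | E.filter (fun e => I e ω ≤ R e.1 ω) = T}} =
      ⋂ i ∈ univ.disjSum E, Sum.elim R I i ⁻¹'
        Sum.elim (fun u => {r u}) (fun e => {n | n ≤ r e.1 ↔ e ∈ T}) i := by
    ext ω
    simp only [Set.mem_ofPred_eq, Set.mem_iInter, funext_iff, filter_eq_iff_of_subset hT]
    constructor
    · rintro ⟨hR, hI⟩ (u | e) hi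
      · exact hR u
      · simpa [← hR e.1] using hI e (inr_mem_disjSum.1 hi)
    · intro h
      have hR u : R u ω = r u := h (.inl u) (inl_mem_disjSum.2 (mem_univ u))
      exact ⟨hR, fun e he => by simpa [hR e.1] using h (.inr e) (inr_mem_disjSum.2 he)⟩
  rw [hevent, hindep.measure_inter_preimage_eq_mul _ fun _ _ => .of_discrete, prod_disjSum]
  rfl

theorem measure_filter_le_mem_eq_tsum [IsProbabilityMeasure μ] [DecidableEq V]
    (hRmeas : ∀ u, Measurable (R u)) (hImeas : ∀ e, Measurable (I e))
    (hindep : iIndepFun (Sum.elim R I) μ) {E : Finset (V × V)} {F : V × V → ℕ → ℝ}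
    (hF : ∀ e ∈ E, ∀ n, F e n ∈ Set.Icc 0 1)
    (hIF : ∀ e ∈ E, ∀ n, μ {ω | I e ω ≤ n} = ENNReal.ofReal (F e n))
    (Q : Set (Finset (V × V))) :
    μ {ω | E.filter (fun e => I e ω ≤ R e.1 ω) ∈ Q} = ∑' r : V → ℕ,
      (∏ u, μ {ω | R u ω = r u}) *
        ENNReal.ofReal (multilinearExt E (Q.indicator 1) fun e => F e (r e.1)) := by
  have hfib (r : V → ℕ) : MeasurableSet {ω | (fun u => R u ω) = r} := by
    have : {ω | (fun u => R u ω) = r} = ⋂ u, {ω | R u ω = r u} := by ext; simp [funext_iff]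
    rw [this]
    exact .iInter fun u => hRmeas u (measurableSet_singleton _)
  have hG T (hT : T ⊆ E) : MeasurableSet {ω | E.filter (fun e => I e ω ≤ R e.1 ω) = T} :=
    measurableSet_filter_eq hT fun e _ => measurableSet_le (hImeas e) (hRmeas e.1)
  have hedge (r : V → ℕ) (T : Finset (V × V)) :
      ∏ e ∈ E, μ {ω | I e ω ≤ r e.1 ↔ e ∈ T} =
        ∏ e ∈ E, ENNReal.ofReal (if e ∈ T then F e (r e.1) else 1 - F e (r e.1)) :=
    prod_congr rfl fun e he =>
      measure_setOf_iff (hImeas e measurableSet_Iic) (hF e he _).1 (hIF e he _) _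
  calc μ {ω | E.filter (fun e => I e ω ≤ R e.1 ω) ∈ Q}
      = ∑ T ∈ E.powerset, Q.indicator 1 T *
          ∑' r : V → ℕ, (∏ u, μ {ω | R u ω = r u}) *
            ∏ e ∈ E, ENNReal.ofReal (if e ∈ T then F e (r e.1) else 1 - F e (r e.1)) := by
        rw [measure_mem_eq_sum_indicator_mul (fun ω => filter_subset _ E) hG]
        refine sum_congr rfl fun T hT => congrArg _ ?_
        rw [measure_eq_tsum_inter_fiber hfib (hG T (mem_powerset.1 hT))]
        simp only [measure_fiber_inter_filter_eq hindep (mem_powerset.1 hT),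
          hedge _ T]
    _ = _ := by
        simp only [← ENNReal.tsum_mul_left]
        rw [← Summable.tsum_finsetSum fun _ _ => ENNReal.summable]
        refine tsum_congr fun r => ?_
        rw [ofReal_multilinearExt_indicator (fun e he => hF e he _), mul_sum]
        exact sum_congr rfl fun T _ => by ring

end Probability

section Comparison

variable {V : Type*} [DecidableEq V]

def SubmodularAtTails (d : Finset (V × V) → ℝ) : Prop :=
  ∀ ⦃i j : V × V⦄, i.1 = j.1 →
    ∀ T, d (insert i (insert j T)) - d (insert j T) ≤ d (insert i T) - d T

theorem submodularAtTails_indicator {Q : Set (Finset (V × V))}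
    (hQ : IsUpperSet Q)
    (hsplit : ∀ ⦃i j : V × V⦄, i.1 = j.1 → ∀ T,
      insert i (insert j T) ∈ Q → insert i T ∈ Q ∨ insert j T ∈ Q) :
    SubmodularAtTails (Q.indicator 1) := by
  intro i j hij T
  have hiT := monotone_indicator_one hQ (subset_insert i T)
  by_cases hijT : insert i (insert j T) ∈ Q
  · by_cases hjT : insert j T ∈ Q
    · simpa [hijT, hjT] using hiT
    · have hT : T ∉ Q := fun hT => hjT (hQ (subset_insert j T) hT)
      rcases hsplit hij T hijT with h | h
      · simp [hijT, hjT, hT, h]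
      · exact absurd h hjT
  · have hjT : 0 ≤ Q.indicator (1 : Finset (V × V) → ℝ) (insert j T) :=
      Set.indicator_nonneg (fun _ _ => zero_le_one) _
    simp only [Set.indicator_of_notMem hijT]
    linarith

theorem submodularAtTails_indicator_setOf_reaches (S : Finset V) (v : V) :
    SubmodularAtTails ({T | ∃ s ∈ S, reaches T s v}.indicator 1) :=
  submodularAtTails_indicator (isUpperSet_setOf_reaches S v)
    fun _ _ hij _ ⟨s, hs, h⟩ =>
      (reaches_insert_or_reaches_insert hij h).imp (fun h => ⟨s, hs, h⟩) fun h => ⟨s, hs, h⟩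

variable {E : Finset (V × V)} {d : Finset (V × V) → ℝ}

theorem tsum_mul_multilinearExt_le_update (hd01 : ∀ T, d T ∈ Set.Icc 0 1) (hdm : Monotone d)
    (hds : SubmodularAtTails d) {w : ℕ → ℝ} (hw0 : ∀ n, 0 ≤ w n) (hw : HasSum w 1)
    {θ : ℕ → V × V → ℝ} (hθ : ∀ n, ∀ e ∈ E, θ n e ∈ Set.Icc 0 1) {i : V × V}
    (hi : i ∈ E)
    (hconst : ∀ e ∈ E, e.1 ≠ i.1 → ∀ m n, θ m e = θ n e)
    (hmono : ∀ e ∈ E, e.1 = i.1 → Monotone fun n => θ n e) :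
    ∑' n, w n * multilinearExt E d (θ n) ≤
      ∑' n, w n * multilinearExt E d (Function.update (θ n) i (∑' m, w m * θ m i)) := by
  set E' := E.erase i
  have hiE' : i ∉ E' := notMem_erase i E
  have hE : E = insert i E' := (insert_erase hi).symm
  have hθ' n : ∀ e ∈ E', θ n e ∈ Set.Icc 0 1 := fun e he => hθ n e (mem_of_mem_erase he)
  set A : ℕ → ℝ := fun n => multilinearExt E' (fun T => d (insert i T)) (θ n)
  set B : ℕ → ℝ := fun n => multilinearExt E' d (θ n)
  have hsplit n (x : ℝ) :
      multilinearExt E d (Function.update (θ n) i x) = x * A n + (1 - x) * B n := by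
    rw [hE, multilinearExt_insert hiE', Function.update_self]
    have hupd (d' : Finset (V × V) → ℝ) :=
      multilinearExt_congr (E := E') (d := d') (θ := Function.update (θ n) i x) fun e he =>
        Function.update_of_ne (ne_of_mem_of_not_mem he hiE') x (θ n)
    rw [hupd, hupd]
  have hgap : Antitone (A - B) := by
    intro m n hmn
    simp only [A, B, Pi.sub_apply, multilinearExt_sub]
    refine multilinearExt_le_of_le (hθ' m) (hθ' n) (fun e he => ?_) (fun e he hlt T => ?_)
    · by_cases hei : e.1 = i.1
      · exact hmono e (mem_of_mem_erase he) hei hmn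
      · exact (hconst e (mem_of_mem_erase he) hei m n).le
    · by_cases hei : e.1 = i.1
      · simpa only [Pi.sub_apply] using hds hei.symm T
      · exact absurd (hconst e (mem_of_mem_erase he) hei m n) hlt.ne
  calc ∑' n, w n * multilinearExt E d (θ n)
      = ∑' n, w n * (θ n i * A n + (1 - θ n i) * B n) :=
        tsum_congr fun n => by rw [← hsplit, Function.update_eq_self]
    _ ≤ ∑' n, w n * ((∑' m, w m * θ m i) * A n + (1 - ∑' m, w m * θ m i) * B n) :=
        tsum_mul_mix_le_tsum_mul_mix_mean hw0 hw (hmono i hi rfl) (fun n => hθ n i hi)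
          (fun n => multilinearExt_nonneg (hθ' n) fun T => (hd01 T).1)
          (fun n => multilinearExt_mono (hθ' n) fun T => hdm (subset_insert i T))
          (fun n => multilinearExt_le_one (hθ' n) fun T => (hd01 _).2) hgap
    _ = _ := tsum_congr fun n => by rw [hsplit]

theorem tsum_prod_mul_le_of_forall_update {ι : Type*} [Fintype ι] [DecidableEq ι]
    (w : ι → ℕ → ℝ≥0∞) {f g : (ι → ℕ) → ℝ≥0∞} (u : ι)
    (h : ∀ r, ∑' t, w u t * f (Function.update r u t) ≤
      ∑' t, w u t * g (Function.update r u t)) :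
    ∑' r, (∏ v, w v (r v)) * f r ≤ ∑' r, (∏ v, w v (r v)) * g r := by
  set e := Equiv.funSplitAt u ℕ
  have hsplit (F : (ι → ℕ) → ℝ≥0∞) : ∑' r, (∏ v, w v (r v)) * F r =
      ∑' rh, (∏ v ∈ univ.erase u, w v (e.symm (0, rh) v)) *
        ∑' t, w u t * F (Function.update (e.symm (0, rh)) u t) := by
    rw [← e.symm.tsum_eq, ENNReal.tsum_prod', ENNReal.tsum_comm]
    refine tsum_congr fun rh => ?_
    rw [← ENNReal.tsum_mul_left]
    refine tsum_congr fun t => ?_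
    have hupd : e.symm (t, rh) = Function.update (e.symm (0, rh)) u t := by
      funext v
      by_cases hv : v = u
      · subst hv
        simp [e]
      · simp [e, hv]
    rw [hupd, ← mul_prod_erase univ _ (mem_univ u), Function.update_self,
      prod_congr rfl fun v hv => by rw [Function.update_of_ne (ne_of_mem_erase hv)]]
    ring
  rw [hsplit f, hsplit g]
  exact ENNReal.tsum_le_tsum fun rh => mul_le_mul_right (h _) _

theorem tsum_prod_mul_multilinearExt_piecewise_le [Fintype V] (hd01 : ∀ T, d T ∈ Set.Icc 0 1)
    (hdm : Monotone d) (hds : SubmodularAtTails d) {β : V × V → ℝ} {γ : V → ℝ}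
    {p : V × V → ℝ}
    (hβ : ∀ e ∈ E, β e ∈ Set.Ioc 0 1) (hγ : ∀ u, γ u ∈ Set.Ioc 0 1)
    (hp : ∀ e ∈ E, p e = β e / (γ e.1 + β e - γ e.1 * β e))
    (hW : ∑' r : V → ℕ, ∏ u, ENNReal.ofReal (geomWeight (γ u) (r u)) = 1)
    {D : Finset (V × V)} (hD : D ⊆ E) :
    ∑' r : V → ℕ, (∏ u, ENNReal.ofReal (geomWeight (γ u) (r u))) *
        ENNReal.ofReal (multilinearExt E d (D.piecewise (fun e => 1 - (1 - β e) ^ r e.1) p)) ≤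
      ENNReal.ofReal (multilinearExt E d p) := by
  induction D using Finset.induction_on with
  | empty => simp only [piecewise_empty, ENNReal.tsum_mul_right, hW, one_mul, le_refl]
  | insert i D hiD ih =>
    have hi : i ∈ E := hD (mem_insert_self i D)
    refine le_trans ?_ (ih ((subset_insert i D).trans hD))
    refine tsum_prod_mul_le_of_forall_update (fun u n => ENNReal.ofReal (geomWeight (γ u) n)) i.1
      fun r => ?_
    set q : ℕ → V × V → ℝ := fun n e => 1 - (1 - β e) ^ Function.update r i.1 n e.1
    set θ : ℕ → V × V → ℝ := fun n => (insert i D).piecewise (q n) p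
    have hpiecewise (D' : Finset (V × V)) n :
        ∀ e ∈ E, D'.piecewise (q n) p e ∈ Set.Icc 0 1 :=
      fun e he => by
        by_cases heD : e ∈ D'
        · simpa [q, heD] using one_sub_one_sub_pow_mem_Icc (hβ e he) _
        · simpa [heD, hp e he] using div_add_sub_mul_mem_Icc (hγ e.1) (hβ e he)
    have hθ01 n : ∀ e ∈ E, θ n e ∈ Set.Icc 0 1 := hpiecewise (insert i D) n
    have hconst : ∀ e ∈ E, e.1 ≠ i.1 → ∀ m n, θ m e = θ n e := fun e _ hei m n => by
      simp [θ, q, Finset.piecewise, Function.update_of_ne hei]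
    have hmono : ∀ e ∈ E, e.1 = i.1 → Monotone fun n => θ n e := fun e he hei => by
      by_cases heD : e ∈ insert i D
      · simpa [θ, q, heD, hei] using monotone_one_sub_one_sub_pow (hβ e he)
      · simpa [θ, heD] using monotone_const
    have hmean : ∑' n, geomWeight (γ i.1) n * θ n i = p i := by
      simpa [θ, q, hp i hi] using (hasSum_geomWeight_mul_one_sub_pow (hγ i.1) (hβ i hi)).tsum_eq
    have hstep := tsum_mul_multilinearExt_le_update hd01 hdm hds
      (geomWeight_nonneg (hγ i.1)) (hasSum_geomWeight (hγ i.1)) hθ01 hi hconst hmono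
    have hupd n : Function.update (θ n) i (p i) = D.piecewise (q n) p := by
      rw [show θ n = (insert i D).piecewise (q n) p from rfl, piecewise_insert,
        Function.update_idem, Function.update_eq_self_iff, piecewise_eq_of_notMem _ _ _ hiD]
    simp only [hmean, hupd] at hstep
    rw [tsum_ofReal_mul_ofReal (geomWeight_nonneg (hγ i.1)) (hasSum_geomWeight (hγ i.1)).summable
        fun n => multilinearExt_mem_Icc (hpiecewise _ n) hd01,
      tsum_ofReal_mul_ofReal (geomWeight_nonneg (hγ i.1)) (hasSum_geomWeight (hγ i.1)).summable
        fun n => multilinearExt_mem_Icc (hpiecewise _ n) hd01]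
    exact ENNReal.ofReal_le_ofReal hstep

theorem tsum_prod_mul_multilinearExt_le [Fintype V] (hd01 : ∀ T, d T ∈ Set.Icc 0 1)
    (hdm : Monotone d) (hds : SubmodularAtTails d) {β : V × V → ℝ} {γ : V → ℝ}
    {p : V × V → ℝ}
    (hβ : ∀ e ∈ E, β e ∈ Set.Ioc 0 1) (hγ : ∀ u, γ u ∈ Set.Ioc 0 1)
    (hp : ∀ e ∈ E, p e = β e / (γ e.1 + β e - γ e.1 * β e))
    (hW : ∑' r : V → ℕ, ∏ u, ENNReal.ofReal (geomWeight (γ u) (r u)) = 1) :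
    ∑' r : V → ℕ, (∏ u, ENNReal.ofReal (geomWeight (γ u) (r u))) *
        ENNReal.ofReal (multilinearExt E d fun e => 1 - (1 - β e) ^ r e.1) ≤
      ENNReal.ofReal (multilinearExt E d p) := by
  refine (tsum_congr fun r => ?_).trans_le
    (tsum_prod_mul_multilinearExt_piecewise_le hd01 hdm hds hβ hγ hp hW subset_rfl)
  rw [multilinearExt_congr (θ := E.piecewise _ p) fun e he => piecewise_eq_of_mem _ _ p he]

end Comparison

end LiveEdge

open LiveEdge in
theorem stmt_11_general {V : Type*} [Fintype V]
    (E : Finset (V × V)) (β : V × V → ℝ) (γ : V → ℝ) (p : V × V → ℝ)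
    (hβ : ∀ e ∈ E, 0 < β e ∧ β e ≤ 1) (hγ : ∀ v, 0 < γ v ∧ γ v ≤ 1)
    (hmatch : ∀ e ∈ E, p e = β e / (γ e.1 + β e - γ e.1 * β e))
    -- the IC live-edge model on a probability space `(Ω₁, μ₁)`
    {Ω₁ : Type*} [MeasurableSpace Ω₁] (μ₁ : Measure Ω₁) [IsProbabilityMeasure μ₁]
    (B : V × V → Ω₁ → Bool) (hBmeas : ∀ e, Measurable (B e))
    (hBdist : ∀ e ∈ E, μ₁ {ω | B e ω = true} = ENNReal.ofReal (p e))
    (hBindep : iIndepFun B μ₁)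
    (GIC : Ω₁ → Finset (V × V))
    (hGIC : ∀ ω, GIC ω = E.filter (fun e => B e ω = true))
    -- the SIR live-edge model on a probability space `(Ω₂, μ₂)`
    {Ω₂ : Type*} [MeasurableSpace Ω₂] (μ₂ : Measure Ω₂) [IsProbabilityMeasure μ₂]
    (R : V → Ω₂ → ℕ) (I : V × V → Ω₂ → ℕ)
    (hRmeas : ∀ v, Measurable (R v)) (hImeas : ∀ e, Measurable (I e))
    (hRdist : ∀ v, ∀ t : ℕ, 1 ≤ t →
      μ₂ {ω | R v ω = t} = ENNReal.ofReal (γ v * (1 - γ v) ^ (t - 1)))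
    (hIdist : ∀ e ∈ E, ∀ t : ℕ, 1 ≤ t →
      μ₂ {ω | I e ω = t} = ENNReal.ofReal (β e * (1 - β e) ^ (t - 1)))
    (hindep : iIndepFun (Sum.elim R I : V ⊕ (V × V) → Ω₂ → ℕ) μ₂)
    (GSIR : Ω₂ → Finset (V × V))
    (hGSIR : ∀ ω, GSIR ω = E.filter (fun e => I e ω ≤ R e.1 ω))
    (S : Finset V) (v : V) :
    μ₁ {ω | ∃ s ∈ S, reaches (GIC ω) s v} ≥ μ₂ {ω | ∃ s ∈ S, reaches (GSIR ω) s v} := by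
  classical
  set Q : Set (Finset (V × V)) := {T | ∃ s ∈ S, reaches T s v}
  have hp : ∀ e ∈ E, p e ∈ Set.Icc 0 1 := fun e he =>
    hmatch e he ▸ div_add_sub_mul_mem_Icc (hγ e.1) (hβ e he)
  have hRpmf u := measure_eq_ofReal_geomWeight (hRmeas u) (hγ u) (hRdist u)
  have hSIR (Q' : Set (Finset (V × V))) :
      μ₂ {ω | E.filter (fun e => I e ω ≤ R e.1 ω) ∈ Q'} = ∑' r : V → ℕ,
        (∏ u, ENNReal.ofReal (geomWeight (γ u) (r u))) *
          ENNReal.ofReal (multilinearExt E (Q'.indicator 1) fun e => 1 - (1 - β e) ^ r e.1) := by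
    simpa only [hRpmf] using measure_filter_le_mem_eq_tsum hRmeas hImeas hindep
      (fun e he => one_sub_one_sub_pow_mem_Icc (hβ e he)) (fun e he =>
        measure_le_eq_ofReal_one_sub_pow (hImeas e) (hβ e he)
          (measure_eq_ofReal_geomWeight (hImeas e) (hβ e he) (hIdist e he))) Q'
  have hW : ∑' r : V → ℕ, ∏ u, ENNReal.ofReal (geomWeight (γ u) (r u)) = 1 := by
    simpa [Pi.one_def, multilinearExt_const] using (hSIR Set.univ).symm
  simp only [hGIC, hGSIR]
  change μ₂ {ω | _ ∈ Q} ≤ μ₁ {ω | _ ∈ Q}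
  rw [hSIR, measure_filter_mem_eq_ofReal_multilinearExt hBmeas hBindep hp hBdist]
  exact tsum_prod_mul_multilinearExt_le (indicator_one_mem_Icc Q)
    (monotone_indicator_one (isUpperSet_setOf_reaches S v))
    (submodularAtTails_indicator_setOf_reaches S v) hβ hγ hmatch hW

/-- IC dominates SIR vertex-wise: with matching parameters, for every seed set `S`
and every vertex `v`, the probability that some seed reaches `v` in the IC live-edge
graph is at least the probability that some seed reaches `v` in the SIR live-edge
graph, i.e. `P(S ∩ RR_{𝒢_IC}(v) ≠ ∅) ≥ P(S ∩ RR_{𝒢_SIR}(v) ≠ ∅)`. -/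
theorem stmt_11 {V : Type*} [Fintype V] [DecidableEq V]
    (E : Finset (V × V)) (β : V × V → ℝ) (γ : V → ℝ) (p : V × V → ℝ)
    (hβ : ∀ e ∈ E, 0 < β e ∧ β e ≤ 1) (hγ : ∀ v, 0 < γ v ∧ γ v ≤ 1)
    (hmatch : ∀ e ∈ E, p e = β e / (γ e.1 + β e - γ e.1 * β e))
    -- the IC live-edge model on a probability space `(Ω₁, μ₁)`
    {Ω₁ : Type*} [MeasurableSpace Ω₁] (μ₁ : Measure Ω₁) [IsProbabilityMeasure μ₁]
    (B : V × V → Ω₁ → Bool) (hBmeas : ∀ e, Measurable (B e))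
    (hBdist : ∀ e ∈ E, μ₁ {ω | B e ω = true} = ENNReal.ofReal (p e))
    (hBindep : iIndepFun B μ₁)
    (GIC : Ω₁ → Finset (V × V))
    (hGIC : ∀ ω, GIC ω = E.filter (fun e => B e ω = true))
    -- the SIR live-edge model on a probability space `(Ω₂, μ₂)`
    {Ω₂ : Type*} [MeasurableSpace Ω₂] (μ₂ : Measure Ω₂) [IsProbabilityMeasure μ₂]
    (R : V → Ω₂ → ℕ) (I : V × V → Ω₂ → ℕ)
    (hRmeas : ∀ v, Measurable (R v)) (hImeas : ∀ e, Measurable (I e))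
    (hRdist : ∀ v, ∀ t : ℕ, 1 ≤ t →
      μ₂ {ω | R v ω = t} = ENNReal.ofReal (γ v * (1 - γ v) ^ (t - 1)))
    (hIdist : ∀ e ∈ E, ∀ t : ℕ, 1 ≤ t →
      μ₂ {ω | I e ω = t} = ENNReal.ofReal (β e * (1 - β e) ^ (t - 1)))
    (hindep : iIndepFun (Sum.elim R I : V ⊕ (V × V) → Ω₂ → ℕ) μ₂)
    (GSIR : Ω₂ → Finset (V × V))
    (hGSIR : ∀ ω, GSIR ω = E.filter (fun e => I e ω ≤ R e.1 ω))
    (S : Finset V) (v : V) :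
    μ₁ {ω | ∃ s ∈ S, reaches (GIC ω) s v} ≥ μ₂ {ω | ∃ s ∈ S, reaches (GSIR ω) s v} :=
  stmt_11_general E β γ p hβ hγ hmatch μ₁ B hBmeas hBdist hBindep GIC hGIC μ₂ R I hRmeas hImeas
    hRdist hIdist hindep GSIR hGSIR S v
end

section
/- Let V be a finite set of size n, E ⊆ V × V, and let μ be any probability measure on the subsets of E (a live-edge model). Then for every seed set S ⊆ V: E_{H∼μ}[|Reach_H(S)|] = ∑_{v∈V} P_{H∼μ}(S ∩ RR_H(v) ≠ ∅) = n · P(S ∩ RR_H(v*) ≠ ∅), where in the last expression H ∼ μ and v* is drawn uniformly at random from V independently of H. -/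
open MeasureTheory ProbabilityTheory ENNReal

/-- Reverse-reachable-set characterization of the influence spread: for any
live-edge model `μ` (a probability measure on subsets of `E`) and any seed set `S`,
`E_{H∼μ}[|Reach_H(S)|] = ∑_{v∈V} P(S ∩ RR_H(v) ≠ ∅) = n · P(S ∩ RR_H(v*) ≠ ∅)`,
where `v*` is uniform on `V` and independent of `H`. -/
theorem stmt_13 {V : Type*} [Fintype V] [DecidableEq V] [Nonempty V]
    [MeasurableSpace V] [MeasurableSingletonClass V]
    [MeasurableSpace (Finset (V × V))] [MeasurableSingletonClass (Finset (V × V))]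
    (E : Finset (V × V)) (μ : Measure (Finset (V × V))) [IsProbabilityMeasure μ]
    (hsupp : ∀ᵐ H ∂μ, H ⊆ E) (S : Finset V) :
    (∫⁻ H, (Set.ncard {v : V | ∃ s ∈ S, reaches H s v} : ℝ≥0∞) ∂μ
        = ∑ v : V, μ {H | ∃ s ∈ S, reaches H s v}) ∧
    (∑ v : V, μ {H | ∃ s ∈ S, reaches H s v}
        = (Fintype.card V : ℝ≥0∞) *
          (μ.prod (PMF.uniformOfFintype V).toMeasure)
            {Hv : Finset (V × V) × V | ∃ s ∈ S, reaches Hv.1 s Hv.2}) := by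
  classical
  have hFin : Finite (Finset (V × V)) := inferInstance
  have hmeas : ∀ (A : Set (Finset (V × V))), MeasurableSet A := fun A =>
    A.toFinite.measurableSet
  -- Part 1
  have hcount : ∀ H : Finset (V × V),
      (Set.ncard {v : V | ∃ s ∈ S, reaches H s v} : ℝ≥0∞)
        = ∑ v : V, Set.indicator {H' | ∃ s ∈ S, reaches H' s v} (fun _ => 1) H := by
    intro H
    have h1 : {v : V | ∃ s ∈ S, reaches H s v}.ncard
        = (Finset.univ.filter (fun v => ∃ s ∈ S, reaches H s v)).card := by
      rw [← Set.ncard_coe_finset]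
      congr 1
      ext v; simp
    rw [h1, Finset.card_filter]
    push_cast
    refine Finset.sum_congr rfl fun v _ => ?_
    by_cases hv : ∃ s ∈ S, reaches H s v <;>
      simp [Set.indicator_apply, hv]
  have part1 : ∫⁻ H, (Set.ncard {v : V | ∃ s ∈ S, reaches H s v} : ℝ≥0∞) ∂μ
      = ∑ v : V, μ {H | ∃ s ∈ S, reaches H s v} := by
    simp_rw [hcount]
    rw [lintegral_finset_sum]
    · refine Finset.sum_congr rfl fun v _ => ?_
      rw [lintegral_indicator_const (hmeas _), one_mul]
    · intro v _
      exact (measurable_one.indicator (hmeas _))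
  refine ⟨part1, ?_⟩
  -- Part 2
  set ν := (PMF.uniformOfFintype V).toMeasure with hν
  set T : Set (Finset (V × V) × V) := {Hv | ∃ s ∈ S, reaches Hv.1 s Hv.2} with hT
  have hTm : MeasurableSet T := T.toFinite.measurableSet
  have hprod : (μ.prod ν) T = ∫⁻ H, ν (Prod.mk H ⁻¹' T) ∂μ :=
    Measure.prod_apply hTm
  have hν_apply : ∀ H : Finset (V × V),
      ν (Prod.mk H ⁻¹' T)
        = ∑ v : V, Set.indicator {H' | ∃ s ∈ S, reaches H' s v}
            (fun _ => ((Fintype.card V : ℝ≥0∞))⁻¹) H := by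
    intro H
    rw [hν, PMF.toMeasure_apply_fintype]
    refine Finset.sum_congr rfl fun v _ => ?_
    by_cases hv : ∃ s ∈ S, reaches H s v <;>
      simp [Set.indicator_apply, hv, T, PMF.uniformOfFintype_apply]
  have hcard_ne : (Fintype.card V : ℝ≥0∞) ≠ 0 := by
    exact_mod_cast Nat.cast_ne_zero.mpr Fintype.card_ne_zero
  have hcard_ne' : (Fintype.card V : ℝ≥0∞) ≠ ⊤ := by simp
  rw [hprod]
  simp_rw [hν_apply]
  rw [lintegral_finset_sum _ (fun v _ => (measurable_const.indicator (hmeas _)))]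
  rw [Finset.mul_sum]
  refine Finset.sum_congr rfl fun v _ => ?_
  rw [lintegral_indicator_const (hmeas _), ← mul_assoc,
    ENNReal.mul_inv_cancel hcard_ne hcard_ne', one_mul]
end

section
/- Let V be a finite set, E ⊆ V × V, and let μ be any probability measure on the subsets of E (a live-edge model). Define σ(S) = E_{H∼μ}[|Reach_H(S)|] for S ⊆ V. Then σ is submodular: for all S ⊆ T ⊆ V and every w ∈ V \ T, σ(S ∪ {w}) − σ(S) ≥ σ(T ∪ {w}) − σ(T). -/
open MeasureTheory ProbabilityTheory

lemma reach_union {V : Type*} [DecidableEq V] (H : Finset (V × V)) (A B : Finset V) :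
    {v : V | ∃ s ∈ A ∪ B, reaches H s v}
      = {v : V | ∃ s ∈ A, reaches H s v} ∪ {v : V | ∃ s ∈ B, reaches H s v} := by
  ext v
  simp only [Set.mem_setOf_eq, Set.mem_union, Finset.mem_union]
  constructor
  · rintro ⟨s, hs | hs, h⟩
    exacts [Or.inl ⟨s, hs, h⟩, Or.inr ⟨s, hs, h⟩]
  · rintro (⟨s, hs, h⟩ | ⟨s, hs, h⟩)
    exacts [⟨s, Or.inl hs, h⟩, ⟨s, Or.inr hs, h⟩]

lemma union_ncard_eq {V : Type*} [Fintype V] (A B : Set V) :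
    (A ∪ B).ncard = A.ncard + (B \ A).ncard := by
  rw [show A ∪ B = A ∪ (B \ A) by rw [Set.union_diff_self],
    Set.ncard_union_eq Set.disjoint_sdiff_right (Set.toFinite _) (Set.toFinite _)]

lemma pointwise_submod {V : Type*} [Fintype V] [DecidableEq V]
    (H : Finset (V × V)) (S T : Finset V) (hST : S ⊆ T) (w : V) :
    (Set.ncard {v : V | ∃ s ∈ T ∪ {w}, reaches H s v} : ℝ)
      + Set.ncard {v : V | ∃ s ∈ S, reaches H s v}
      ≤ (Set.ncard {v : V | ∃ s ∈ S ∪ {w}, reaches H s v} : ℝ)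
      + Set.ncard {v : V | ∃ s ∈ T, reaches H s v} := by
  set RS := {v : V | ∃ s ∈ S, reaches H s v}
  set RT := {v : V | ∃ s ∈ T, reaches H s v}
  set RW := {v : V | ∃ s ∈ ({w} : Finset V), reaches H s v}
  have hsub : RS ⊆ RT := by
    rintro v ⟨s, hs, h⟩; exact ⟨s, hST hs, h⟩
  rw [reach_union, reach_union]
  have h1 : (RS ∪ RW).ncard = RS.ncard + (RW \ RS).ncard := union_ncard_eq RS RW
  have h2 : (RT ∪ RW).ncard = RT.ncard + (RW \ RT).ncard := union_ncard_eq RT RW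
  have h3 : (RW \ RT).ncard ≤ (RW \ RS).ncard :=
    Set.ncard_le_ncard (Set.diff_subset_diff_right hsub) (Set.toFinite _)
  rw [h1, h2]
  push_cast
  linarith [(Nat.cast_le (α := ℝ)).mpr h3]

/-- The expected influence spread `σ(S) = E_{H∼μ}[|Reach_H(S)|]` of any live-edge
model `μ` is submodular: for `S ⊆ T ⊆ V` and `w ∉ T`,
`σ(S ∪ {w}) − σ(S) ≥ σ(T ∪ {w}) − σ(T)`. -/
theorem stmt_14 {V : Type*} [Fintype V] [DecidableEq V]
    [MeasurableSpace (Finset (V × V))] [MeasurableSingletonClass (Finset (V × V))]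
    (E : Finset (V × V)) (μ : Measure (Finset (V × V))) [IsProbabilityMeasure μ]
    (hsupp : ∀ᵐ H ∂μ, H ⊆ E)
    (σ : Finset V → ℝ)
    (hσ : ∀ S, σ S = ∫ H, (Set.ncard {v : V | ∃ s ∈ S, reaches H s v} : ℝ) ∂μ)
    (S T : Finset V) (hST : S ⊆ T) (w : V) (hw : w ∉ T) :
    σ (S ∪ {w}) - σ S ≥ σ (T ∪ {w}) - σ T := by
  have key : σ (T ∪ {w}) + σ S ≤ σ (S ∪ {w}) + σ T := by
    rw [hσ, hσ, hσ, hσ, ← integral_add Integrable.of_finite Integrable.of_finite,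
      ← integral_add Integrable.of_finite Integrable.of_finite]
    exact integral_mono Integrable.of_finite Integrable.of_finite
      (fun H => pointwise_submod H S T hST w)
  linarith
end
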